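/- arXiv:math/0411056 — 2 statements merged into one kernel-verified Lean document; each statement's English description precedes it below -/
import Mathlib

section
/- Let V be a real vector space with dim V ≥ r, and let 𝔩 ⊆ ℝ[S_r] be a left ideal. Then 𝔩 equals the real linear span of the set {T_b : T ∈ T_{𝔩*}, b ∈ V^r}, where T_{𝔩*} := {aT : a ∈ 𝔩*, T an r-multilinear map V^r → ℝ} and 𝔩* := {a* : a ∈ 𝔩}. -/
/-- Action of a group ring element `a ∈ ℝ[S_r]` on an `r`-multilinear map:
`(aT)(v₁,…,v_r) = Σ_p a(p)·T(v_{p(1)},…,v_{p(r)})`. -/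
noncomputable def gact {V : Type} [AddCommGroup V] [Module ℝ V] {r : ℕ}
    (a : MonoidAlgebra ℝ (Equiv.Perm (Fin r)))
    (T : MultilinearMap ℝ (fun _ : Fin r => V) ℝ) :
    MultilinearMap ℝ (fun _ : Fin r => V) ℝ :=
  ∑ p : Equiv.Perm (Fin r), a.coeff p • T.domDomCongr p
/-- The star map `a* := Σ_p a(p)·p⁻¹` on the group ring `ℝ[S_r]`. -/
noncomputable def astar {r : ℕ} (a : MonoidAlgebra ℝ (Equiv.Perm (Fin r))) :
    MonoidAlgebra ℝ (Equiv.Perm (Fin r)) :=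
  MonoidAlgebra.ofCoeff (Finsupp.equivFunOnFinite.symm (fun p => a.coeff p⁻¹))
/-- `T_b := Σ_p T(v_{p(1)},…,v_{p(r)})·p ∈ ℝ[S_r]` for `b = (v₁,…,v_r)`. -/
noncomputable def tb {V : Type} [AddCommGroup V] [Module ℝ V] {r : ℕ}
    (T : MultilinearMap ℝ (fun _ : Fin r => V) ℝ) (b : Fin r → V) :
    MonoidAlgebra ℝ (Equiv.Perm (Fin r)) :=
  MonoidAlgebra.ofCoeff (Finsupp.equivFunOnFinite.symm (fun (p : Equiv.Perm (Fin r)) => T (fun i => b (p i))))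

/-! The key identity is `T_{(a*)T, b} = T_b · a`. Since `𝔩` is a left ideal, it puts every
generator of the span inside `𝔩`. Conversely, `dim V ≥ r` gives linearly independent
`b₁, …, b_r` and functionals dual to them, whose product `T` satisfies `T_b = 1`; then every
`a ∈ 𝔩` is the generator `T_{(a*)T, b}`. -/

section

variable {V : Type} [AddCommGroup V] [Module ℝ V] {r : ℕ}

@[simp]
lemma coeff_tb (T : MultilinearMap ℝ (fun _ : Fin r => V) ℝ) (b : Fin r → V)
    (p : Equiv.Perm (Fin r)) : (tb T b).coeff p = T (fun i => b (p i)) := by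
  simp [tb]

lemma gact_apply (a : MonoidAlgebra ℝ (Equiv.Perm (Fin r)))
    (T : MultilinearMap ℝ (fun _ : Fin r => V) ℝ) (v : Fin r → V) :
    gact a T v = ∑ p : Equiv.Perm (Fin r), a.coeff p * T (fun i => v (p i)) := by
  simp [gact]

lemma tb_gact_astar (a : MonoidAlgebra ℝ (Equiv.Perm (Fin r)))
    (T : MultilinearMap ℝ (fun _ : Fin r => V) ℝ) (b : Fin r → V) :
    tb (gact (astar a) T) b = tb T b * a := by
  ext p
  rw [coeff_tb, gact_apply, MonoidAlgebra.coeff_mul_apply_right,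
    Finsupp.sum_fintype _ _ (by simp)]
  refine Fintype.sum_equiv (Equiv.inv _) _ _ fun q => ?_
  simp only [astar, MonoidAlgebra.coeff_ofCoeff, Finsupp.equivFunOnFinite_symm_apply_apply,
    Equiv.inv_apply, inv_inv, coeff_tb, mul_comm]
  rfl

/-- Take `T v = ∏ᵢ gᵢ (vᵢ)` with `gᵢ (b j) = δᵢⱼ`; then `T (b ∘ p)` vanishes unless `p = 1`. -/
lemma exists_tb_eq_one_of_linearIndependent {b : Fin r → V} (hb : LinearIndependent ℝ b) :
    ∃ T : MultilinearMap ℝ (fun _ : Fin r => V) ℝ, tb T b = 1 := by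
  obtain ⟨g, hg⟩ := (Fintype.linearCombination ℝ b).exists_leftInverse_of_injective
    (LinearMap.ker_eq_bot.mpr hb.fintypeLinearCombination_injective)
  have hgb : ∀ i j, g (b j) i = if i = j then 1 else 0 := fun i j => by
    have := congrArg (fun φ => φ (Pi.single j 1) i) hg
    simpa [Fintype.linearCombination_apply_single, Pi.single_apply] using this
  refine ⟨(MultilinearMap.mkPiAlgebra ℝ (Fin r) ℝ).compLinearMap
    fun i => LinearMap.proj i ∘ₗ g, ?_⟩
  ext p
  simp only [coeff_tb, MultilinearMap.compLinearMap_apply, MultilinearMap.mkPiAlgebra_apply,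
    LinearMap.coe_comp, Function.comp_apply, LinearMap.coe_proj, Function.eval, hgb,
    MonoidAlgebra.one_def, MonoidAlgebra.coeff_single, Finsupp.single_apply]
  by_cases hp : p = 1
  · simp [hp]
  · obtain ⟨i, hi⟩ : ∃ i, p i ≠ i := not_forall.mp fun h => hp (Equiv.ext h)
    rw [if_neg (Ne.symm hp)]
    exact Finset.prod_eq_zero (Finset.mem_univ i) (if_neg (Ne.symm hi))

end

/-- If `dim V ≥ r` then every left ideal `𝔩 ⊆ ℝ[S_r]` equals the real linear
span of `{T_b : T ∈ T_{𝔩*}, b ∈ V^r}`, where `T_{𝔩*} = {(a*)T : a ∈ 𝔩, T r-multilinear}`. -/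
theorem stmt_7 (V : Type) [AddCommGroup V] [Module ℝ V] {r : ℕ}
    (hdim : (r : Cardinal) ≤ Module.rank ℝ V)
    (l : Submodule (MonoidAlgebra ℝ (Equiv.Perm (Fin r)))
      (MonoidAlgebra ℝ (Equiv.Perm (Fin r)))) :
    (l : Set (MonoidAlgebra ℝ (Equiv.Perm (Fin r)))) =
      ↑(Submodule.span ℝ {x : MonoidAlgebra ℝ (Equiv.Perm (Fin r)) |
        ∃ a ∈ l, ∃ (T' : MultilinearMap ℝ (fun _ : Fin r => V) ℝ) (b : Fin r → V),
          x = tb (gact (astar a) T') b}) := by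
  obtain ⟨b, hb⟩ := exists_linearIndependent_of_le_rank hdim
  obtain ⟨T, hT⟩ := exists_tb_eq_one_of_linearIndependent hb
  refine subset_antisymm (fun x hx => ?_) ?_
  · exact Submodule.subset_span ⟨x, hx, T, b, by rw [tb_gact_astar, hT, one_mul]⟩
  · change Submodule.span ℝ _ ≤ l.restrictScalars ℝ
    rw [Submodule.span_le]
    rintro _ ⟨a, ha, T', b', rfl⟩
    rw [tb_gact_astar]
    exact l.smul_mem (tb T' b') ha
end

section
/- Let V be a real vector space, 𝔯 ⊆ ℝ[S_r] a right ideal, and 𝔩 := 𝔯* = {a* : a ∈ 𝔯} the corresponding left ideal. Suppose x : S_r → ℝ satisfies Σ_{p∈S_r} h(p)·x(p) = 0 for every h ∈ 𝔩, where h(p) denotes the coefficient of p in h. Then for every tensor T in the symmetry class of 𝔯, i.e. every r-multilinear map of the form T = aT' with a ∈ 𝔯 and T' : V^r → ℝ r-multilinear, and for all v_1,…,v_r ∈ V, one has Σ_{p∈S_r} x(p)·T(v_{p(1)},…,v_{p(r)}) = 0. -/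
/-- A right ideal of a ring `M`, as a set: an additive subgroup with `𝔯·M ⊆ 𝔯`. -/
def IsRightIdeal {M : Type} [Ring M] (s : Set M) : Prop :=
  (0 : M) ∈ s ∧ (∀ x ∈ s, ∀ y ∈ s, x + y ∈ s) ∧ (∀ x ∈ s, -x ∈ s) ∧
    ∀ x ∈ s, ∀ m : M, x * m ∈ s

/-!
Write `(aT')(v ∘ p) = Σ_s a(p⁻¹s) T'(v ∘ s)`. Then `Σ_p x(p) (aT')(v ∘ p)` is a combination of the
values `T'(v ∘ s)` whose coefficients are `Σ_p x(p) a(p⁻¹s) = Σ_p (a s⁻¹)*(p) x(p)`, and these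
vanish because `a·s⁻¹` lies in the right ideal `𝔯`.
-/

open MonoidAlgebra

section

variable {r : ℕ}

theorem astar_coeff (a : MonoidAlgebra ℝ (Equiv.Perm (Fin r))) (p : Equiv.Perm (Fin r)) :
    (astar a).coeff p = a.coeff p⁻¹ := by
  simp [astar]

theorem astar_mul_single_inv_coeff (a : MonoidAlgebra ℝ (Equiv.Perm (Fin r)))
    (s p : Equiv.Perm (Fin r)) :
    (astar (a * single s⁻¹ 1)).coeff p = a.coeff (p⁻¹ * s) := by
  simp [astar_coeff, coeff_mul_single_apply]

theorem gact_apply_comp {V : Type} [AddCommGroup V] [Module ℝ V]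
    (a : MonoidAlgebra ℝ (Equiv.Perm (Fin r))) (T : MultilinearMap ℝ (fun _ : Fin r => V) ℝ)
    (v : Fin r → V) (p : Equiv.Perm (Fin r)) :
    gact a T (fun i => v (p i)) = ∑ s, a.coeff (p⁻¹ * s) * T (fun i => v (s i)) := by
  rw [gact, FunLike.coe_sum, Finset.sum_apply,
    ← Equiv.sum_comp (Equiv.mulLeft p⁻¹) (fun q => (a.coeff q • T.domDomCongr q) _)]
  simp [MultilinearMap.domDomCongr_apply, Equiv.Perm.mul_apply]

theorem sum_mul_gact_apply_comp {V : Type} [AddCommGroup V] [Module ℝ V]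
    (a : MonoidAlgebra ℝ (Equiv.Perm (Fin r))) (T : MultilinearMap ℝ (fun _ : Fin r => V) ℝ)
    (x : Equiv.Perm (Fin r) → ℝ) (v : Fin r → V) :
    ∑ p, x p * gact a T (fun i => v (p i)) =
      ∑ s, (∑ p, (astar (a * single s⁻¹ 1)).coeff p * x p) * T (fun i => v (s i)) := by
  simp_rw [gact_apply_comp, astar_mul_single_inv_coeff, Finset.mul_sum, Finset.sum_mul]
  rw [Finset.sum_comm]
  simp only [mul_comm, mul_assoc]

end

/-- Let `𝔯 ⊆ ℝ[S_r]` be a right ideal and `𝔩 := 𝔯* = {a* : a ∈ 𝔯}`. If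
`x : S_r → ℝ` satisfies `Σ_p h(p)·x(p) = 0` for every `h ∈ 𝔩`, then every tensor
`T = aT'` of the symmetry class of `𝔯` (`a ∈ 𝔯`, `T'` r-multilinear) satisfies
`Σ_p x(p)·T(v_{p(1)},…,v_{p(r)}) = 0` for all `v₁,…,v_r ∈ V`. -/
theorem stmt_19 (V : Type) [AddCommGroup V] [Module ℝ V] {r : ℕ}
    (𝔯 : Set (MonoidAlgebra ℝ (Equiv.Perm (Fin r)))) (h𝔯 : IsRightIdeal 𝔯)
    (x : Equiv.Perm (Fin r) → ℝ)
    (hx : ∀ h ∈ astar '' 𝔯, ∑ p : Equiv.Perm (Fin r), h.coeff p * x p = 0) :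
    ∀ a ∈ 𝔯, ∀ T' : MultilinearMap ℝ (fun _ : Fin r => V) ℝ, ∀ v : Fin r → V,
      ∑ p : Equiv.Perm (Fin r), x p * (gact a T') (fun i => v (p i)) = 0 := by
  intro a ha T' v
  rw [sum_mul_gact_apply_comp]
  refine Finset.sum_eq_zero fun s _ => ?_
  rw [hx _ ⟨_, h𝔯.2.2.2 a ha (single s⁻¹ 1), rfl⟩, zero_mul]
end
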